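/- For all integers k ≥ 0, 0 ≤ i ≤ k, and every real x with 0 < |x| < 1/(2·cos(π/(k+2))), the generating function D_k(x;i) = Σ_{j≥0} D_k(i,j)·x^j satisfies the product formula D_k(x;i) = R_{k+1}(x²) · Π_{r=1}^{i} ( x · R_{k+1−r}(x²) ), where R_m(t) = U_{m-1}(1/(2√t)) / (√t · U_m(1/(2√t))). -/

import Mathlib

open Real Polynomial Polynomial.Chebyshev Finset

/-- Number of directed paths from `(0,0)` to `(j,i)` in the Bratteli diagram for `SU(2)_k`. -/
def bratteliD (k : ℕ) : ℕ → ℕ → ℕ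
  | i, 0 => if i = 0 then 1 else 0
  | i, j + 1 =>
      if i ≤ k then
        (if 1 ≤ i then bratteliD k (i - 1) j else 0) +
        (if i + 1 ≤ k then bratteliD k (i + 1) j else 0)
      else 0

/-- `R_m(t) = U_{m-1}(1/(2√t)) / (√t · U_m(1/(2√t)))`. -/
noncomputable def chebR (m : ℕ) (t : ℝ) : ℝ :=
  (Chebyshev.U ℝ ((m : ℤ) - 1)).eval (1 / (2 * Real.sqrt t)) /
    (Real.sqrt t * (Chebyshev.U ℝ (m : ℤ)).eval (1 / (2 * Real.sqrt t)))

/-!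
Paths in the Bratteli diagram are walks on the path graph `0 — 1 — ⋯ — k` started at `0`, so
the generating functions `G_i = D_k(x; i)` solve the tridiagonal system `G_0 = 1 + x G_1`,
`G_i = x (G_{i-1} + G_{i+1})`, `G_{k+1} = 0`. Back-substitution from the bottom gives
`G_{i+1} = x ρ_{k-i} G_i` for the continued fraction `ρ_0 = 0`, `ρ_{m+1} = 1 / (1 - x² ρ_m)`,
and the three-term recurrence of the `U_n` identifies `ρ_m` with `R_m(x²)`; the denominators
`U_m(1/(2|x|))`, `m ≤ k + 1`, are positive because `1/(2|x|)` lies beyond the largest root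
`cos (π/(k+2))` of `U_{k+1}`. The series converge since `(U_i(cos (π/(k+2))))_{i ≤ k}` is a
positive eigenvector of the path's adjacency matrix for the eigenvalue `2 cos (π/(k+2))`, which
bounds `D_k(i, j)` by a multiple of `(2 cos (π/(k+2)))^j`.
-/

lemma bratteliD_eq_zero_of_lt {k i : ℕ} (h : k < i) : ∀ j, bratteliD k i j = 0
  | 0 => by simp [bratteliD]; omega
  | j + 1 => by simp [bratteliD]; omega

lemma bratteliD_zero_succ (k j : ℕ) : bratteliD k 0 (j + 1) = bratteliD k 1 j := by
  rcases Nat.eq_zero_or_pos k with rfl | hk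
  · simp [bratteliD, bratteliD_eq_zero_of_lt zero_lt_one]
  · simp [bratteliD, Nat.one_le_iff_ne_zero.mpr hk.ne']

lemma bratteliD_succ_succ {k i : ℕ} (h : i + 1 ≤ k) (j : ℕ) :
    bratteliD k (i + 1) (j + 1) = bratteliD k i j + bratteliD k (i + 2) j := by
  by_cases h2 : i + 2 ≤ k
  · simp [bratteliD, h, h2]
  · simp [bratteliD, h, h2, bratteliD_eq_zero_of_lt (show k < i + 2 by omega)]

lemma U_eval_nat_add_two {R : Type*} [CommRing R] (y : R) (n : ℕ) :
    (U R (n + 2 : ℕ)).eval y = 2 * y * (U R (n + 1 : ℕ)).eval y - (U R n).eval y := by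
  simp only [Nat.cast_add, Nat.cast_ofNat, Nat.cast_one, U_add_two, eval_sub, eval_mul, eval_X,
    eval_ofNat]

lemma sum_bratteliD_mul_U_eval {R : Type*} [CommRing R] (k : ℕ) {y : R}
    (hy : (U R (k + 1 : ℕ)).eval y = 0) (j : ℕ) :
    ∑ i ∈ range (k + 1), (bratteliD k i j : R) * (U R i).eval y = (2 * y) ^ j := by
  set u : ℕ → R := fun i => (U R i).eval y
  have hu (i : ℕ) : u (i + 2) + u i = 2 * y * u (i + 1) := by
    simp only [u, U_eval_nat_add_two]
    ring
  have split_zero (f : ℕ → R) :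
      ∑ i ∈ range (k + 1), f i = f 0 + ∑ i ∈ range k, f (i + 1) := by
    rw [sum_range_succ', add_comm]
  induction j with
  | zero => simp [bratteliD]
  | succ j ih =>
    have lhs : ∑ i ∈ range (k + 1), (bratteliD k i (j + 1) : R) * u i
        = ∑ i ∈ range (k + 1), (bratteliD k (i + 1) j : R) * u i
          + ∑ i ∈ range k, (bratteliD k i j : R) * u (i + 1) := by
      rw [split_zero, split_zero (fun i => (bratteliD k (i + 1) j : R) * u i),
        bratteliD_zero_succ, add_assoc, ← sum_add_distrib]
      congr 1
      refine sum_congr rfl fun i hi => ?_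
      rw [bratteliD_succ_succ (by simpa using hi)]
      push_cast
      ring
    have rhs : (∑ i ∈ range (k + 1), (bratteliD k i j : R) * u i) * (2 * y)
        = ∑ i ∈ range k, (bratteliD k (i + 1) j : R) * u i
          + ∑ i ∈ range (k + 1), (bratteliD k i j : R) * u (i + 1) := by
      rw [split_zero, split_zero (fun i => (bratteliD k i j : R) * u (i + 1)), add_mul, sum_mul,
        add_left_comm, ← sum_add_distrib]
      congr 1
      · simp [u, U_one, mul_comm]
      · refine sum_congr rfl fun i _ => ?_
        linear_combination -(bratteliD k (i + 1) j : R) * hu i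
    have low : ∑ i ∈ range k, (bratteliD k (i + 1) j : R) * u i
        = ∑ i ∈ range (k + 1), (bratteliD k (i + 1) j : R) * u i := by
      simp [sum_range_succ, bratteliD_eq_zero_of_lt (Nat.lt_succ_self k)]
    have high : ∑ i ∈ range k, (bratteliD k i j : R) * u (i + 1)
        = ∑ i ∈ range (k + 1), (bratteliD k i j : R) * u (i + 1) := by
      rw [sum_range_succ, show u (k + 1) = 0 from hy, mul_zero, add_zero]
    rw [pow_succ, ← ih, lhs, rhs, low, high]

lemma strictMono_cos_pi_div_succ : StrictMono fun n : ℕ => cos (π / (n + 1)) := by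
  intro m n h
  have hmn : (m : ℝ) + 1 < n + 1 := by exact_mod_cast Nat.succ_lt_succ h
  apply cos_lt_cos_of_nonneg_of_le_pi (by positivity)
  · exact div_le_self pi_pos.le (by linarith [(m.cast_nonneg : (0 : ℝ) ≤ m)])
  · exact div_lt_div_of_pos_left pi_pos (by positivity) hmn

lemma one_le_U_eval_and_le_succ {y : ℝ} (hy : 1 ≤ y) (n : ℕ) :
    1 ≤ (U ℝ n).eval y ∧ (U ℝ n).eval y ≤ (U ℝ (n + 1 : ℕ)).eval y := by
  induction n with
  | zero => simp [U_one]; linarith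
  | succ n ih =>
    exact ⟨by linarith, by rw [U_eval_nat_add_two]; nlinarith⟩

lemma U_eval_pos {n : ℕ} {y : ℝ} (hy : cos (π / (n + 1)) < y) : 0 < (U ℝ n).eval y := by
  rcases le_or_gt 1 y with h1 | h1
  · linarith [(one_le_U_eval_and_le_succ h1 n).1]
  · set θ := arccos y
    have hθ : cos θ = y := cos_arccos ((neg_one_le_cos _).trans hy.le) h1.le
    have hθpos : 0 < θ := arccos_pos.2 h1
    have hθlt : θ < π / (n + 1) := by
      by_contra! h
      have := cos_le_cos_of_nonneg_of_le_pi (by positivity) (arccos_le_pi y) h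
      linarith
    have hnθ : (n + 1) * θ < π := by rwa [lt_div_iff₀' (by positivity)] at hθlt
    have hsin : 0 < sin θ := sin_pos_of_pos_of_lt_pi hθpos (hθlt.trans_le
      (div_le_self pi_pos.le (by linarith [(n.cast_nonneg : (0 : ℝ) ≤ n)])))
    have hsin' : 0 < sin ((n + 1) * θ) := sin_pos_of_pos_of_lt_pi (by positivity) hnθ
    have key := U_real_cos θ n
    rw [hθ] at key
    push_cast at key
    exact pos_of_mul_pos_left (key ▸ hsin') hsin.le

lemma U_eval_cos_pi_div (n : ℕ) : (U ℝ (n + 1 : ℕ)).eval (cos (π / (n + 2))) = 0 := by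
  have hθ : 0 < π / (n + 2) := by positivity
  have hsin : sin (π / (n + 2)) ≠ 0 := (sin_pos_of_pos_of_lt_pi hθ
    (div_lt_self pi_pos (by linarith [(n.cast_nonneg : (0 : ℝ) ≤ n)]))).ne'
  have key := U_real_cos (π / (n + 2)) (n + 1 : ℕ)
  rw [show ((n + 1 : ℕ) : ℤ) + (1 : ℝ) = n + 2 by push_cast; ring,
    mul_div_cancel₀ _ (by positivity), sin_pi] at key
  exact (mul_eq_zero.1 key).resolve_right hsin

lemma cos_pi_div_succ_lt {m k : ℕ} (h : m ≤ k) : cos (π / (m + 1)) < cos (π / (k + 2)) := by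
  have := strictMono_cos_pi_div_succ (Nat.lt_succ_of_le h)
  push_cast at this
  rwa [add_assoc, one_add_one_eq_two] at this

lemma cos_pi_div_succ_le {m k : ℕ} (h : m ≤ k + 1) :
    cos (π / (m + 1)) ≤ cos (π / (k + 2)) := by
  have := strictMono_cos_pi_div_succ.monotone h
  push_cast at this
  rwa [add_assoc, one_add_one_eq_two] at this

lemma bratteliD_mul_U_eval_le {k i : ℕ} (hi : i ≤ k) (j : ℕ) :
    (bratteliD k i j : ℝ) * (U ℝ i).eval (cos (π / (k + 2)))
      ≤ (2 * cos (π / (k + 2))) ^ j := by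
  rw [← sum_bratteliD_mul_U_eval k (U_eval_cos_pi_div k)]
  refine single_le_sum (f := fun l => (bratteliD k l j : ℝ) * (U ℝ l).eval (cos (π / (k + 2))))
    (fun l hl => mul_nonneg (Nat.cast_nonneg _) (U_eval_pos (cos_pi_div_succ_lt ?_)).le)
    (mem_range.2 (by omega))
  exact Nat.lt_succ_iff.1 (mem_range.1 hl)

lemma summable_abs_bratteliD_mul_pow (k i : ℕ) {x : ℝ}
    (hx : 2 * cos (π / (k + 2)) * |x| < 1) :
    Summable fun j => |(bratteliD k i j : ℝ) * x ^ j| := by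
  rcases lt_or_ge k i with hki | hik
  · simp [bratteliD_eq_zero_of_lt hki]
  set c := cos (π / (k + 2))
  have hc : 0 ≤ c := cos_nonneg_of_neg_pi_div_two_le_of_le
    ((neg_nonpos.2 pi_div_two_pos.le).trans (by positivity))
    (div_le_div_of_nonneg_left pi_pos.le two_pos (by simp))
  have hu : 0 < (U ℝ i).eval c := U_eval_pos (cos_pi_div_succ_lt hik)
  refine .of_nonneg_of_le (fun _ => abs_nonneg _) (fun j => ?_)
    ((summable_geometric_of_lt_one (by positivity) hx).div_const ((U ℝ i).eval c))
  rw [abs_mul, abs_pow, Nat.abs_cast, le_div_iff₀ hu, mul_pow, mul_right_comm]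
  exact mul_le_mul_of_nonneg_right (bratteliD_mul_U_eval_le hik j) (by positivity)

/-- The generating function `D_k(x; i)`. -/
noncomputable def bratteliGF (k i : ℕ) (x : ℝ) : ℝ := ∑' j, (bratteliD k i j : ℝ) * x ^ j

lemma bratteliGF_eq_zero_of_lt {k i : ℕ} (h : k < i) (x : ℝ) : bratteliGF k i x = 0 := by
  simp [bratteliGF, bratteliD_eq_zero_of_lt h]

section GeneratingFunction

variable {k : ℕ} {x : ℝ}

lemma summable_bratteliD_mul_pow (hx : 2 * cos (π / (k + 2)) * |x| < 1) (i : ℕ) :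
    Summable fun j => (bratteliD k i j : ℝ) * x ^ j :=
  (summable_abs_bratteliD_mul_pow k i hx).of_abs

lemma bratteliGF_zero_eq (hx : 2 * cos (π / (k + 2)) * |x| < 1) :
    bratteliGF k 0 x = 1 + x * bratteliGF k 1 x := by
  rw [bratteliGF, (summable_bratteliD_mul_pow hx 0).tsum_eq_zero_add, bratteliGF,
    ← tsum_mul_left]
  congr 1
  · simp [bratteliD]
  · exact tsum_congr fun j => by rw [bratteliD_zero_succ]; ring

lemma bratteliGF_succ_eq (hx : 2 * cos (π / (k + 2)) * |x| < 1) {i : ℕ} (hi : i + 1 ≤ k) :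
    bratteliGF k (i + 1) x = x * (bratteliGF k i x + bratteliGF k (i + 2) x) := by
  rw [bratteliGF, (summable_bratteliD_mul_pow hx _).tsum_eq_zero_add, bratteliGF, bratteliGF,
    ← Summable.tsum_add (summable_bratteliD_mul_pow hx i) (summable_bratteliD_mul_pow hx _),
    ← tsum_mul_left]
  have hD0 : bratteliD k (i + 1) 0 = 0 := by simp [bratteliD]
  rw [hD0, Nat.cast_zero, zero_mul, zero_add]
  exact tsum_congr fun j => by rw [bratteliD_succ_succ hi]; push_cast; ring

end GeneratingFunction

lemma chebR_zero (t : ℝ) : chebR 0 t = 0 := by simp [chebR]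

lemma chebR_succ_mul_one_sub (m : ℕ) {t : ℝ} (ht : 0 < t)
    (hm : (U ℝ m).eval (1 / (2 * √t)) ≠ 0)
    (hm1 : (U ℝ (m + 1 : ℕ)).eval (1 / (2 * √t)) ≠ 0) :
    chebR (m + 1) t * (1 - t * chebR m t) = 1 := by
  have hs : 0 < √t := sqrt_pos.2 ht
  simp only [chebR]
  rw [show ((m + 1 : ℕ) : ℤ) - 1 = m by push_cast; ring]
  set y := 1 / (2 * √t) with hy
  have hstep : √t * (U ℝ (m + 1 : ℕ)).eval y
      = (U ℝ m).eval y - √t * (U ℝ ((m : ℤ) - 1)).eval y := by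
    rw [Nat.cast_succ, U_add_one]
    simp only [eval_sub, eval_mul, eval_X, eval_ofNat, hy]
    field_simp
  field_simp
  linear_combination (-√t) * hstep + (U ℝ ((m : ℤ) - 1)).eval y * sq_sqrt ht.le

section Tridiagonal

variable {R : Type*} [CommRing R] {k : ℕ} {x : R} {ρ G : ℕ → R}

lemma succ_eq_mul_of_tridiagonal (hρ0 : ρ 0 = 0)
    (hρ : ∀ m < k, ρ (m + 1) * (1 - x ^ 2 * ρ m) = 1)
    (hG : ∀ i, i + 1 ≤ k → G (i + 1) = x * (G i + G (i + 2))) (hGk : G (k + 1) = 0) {i : ℕ}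
    (hi : i ≤ k) : G (i + 1) = x * ρ (k - i) * G i := by
  induction hi using Nat.decreasingInduction with
  | self => simp [hGk, hρ0]
  | of_succ i hik ih =>
    obtain ⟨m, hm⟩ : ∃ m, k - i = m + 1 := ⟨k - i - 1, by omega⟩
    rw [show k - (i + 1) = m by omega] at ih
    rw [hm]
    -- `G (i + 1) * (1 - x ^ 2 * ρ m) = x * G i`, multiplied by `ρ (m + 1)`
    linear_combination
      (-G (i + 1)) * hρ m (by omega) + ρ (m + 1) * hG i hik + ρ (m + 1) * x * ih

lemma eq_prod_of_tridiagonal (hρ0 : ρ 0 = 0)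
    (hρ : ∀ m ≤ k, ρ (m + 1) * (1 - x ^ 2 * ρ m) = 1) (hG0 : G 0 = 1 + x * G 1)
    (hG : ∀ i, i + 1 ≤ k → G (i + 1) = x * (G i + G (i + 2)))
    (hGk : G (k + 1) = 0) {i : ℕ} (hi : i ≤ k) :
    G i = ρ (k + 1) * ∏ r ∈ Icc 1 i, (x * ρ (k + 1 - r)) := by
  have hstep {i : ℕ} (hi : i ≤ k) :=
    succ_eq_mul_of_tridiagonal hρ0 (fun m hm => hρ m hm.le) hG hGk hi
  induction i with
  | zero =>
    have h1 := hstep (Nat.zero_le k)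
    rw [Nat.sub_zero] at h1
    simp only [zero_lt_one, Icc_eq_empty_of_lt, prod_empty, mul_one]
    -- `G 0 * (1 - x ^ 2 * ρ k) = 1`, multiplied by `ρ (k + 1)`
    linear_combination (-G 0) * hρ k le_rfl + ρ (k + 1) * hG0 + ρ (k + 1) * x * h1
  | succ i ih =>
    rw [prod_Icc_succ_top (by omega), hstep (by omega), ih (by omega),
      show k + 1 - (i + 1) = k - i by omega]
    ring

end Tridiagonal

theorem bratteliD_generating_function_product (k i : ℕ) (hik : i ≤ k) (x : ℝ)
    (hx0 : 0 < |x|) (hx1 : |x| < 1 / (2 * Real.cos (π / (k + 2)))) :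
    Summable (fun j : ℕ => |(bratteliD k i j : ℝ) * x ^ j|) ∧
    (∑' j : ℕ, (bratteliD k i j : ℝ) * x ^ j) =
      chebR (k + 1) (x ^ 2) * ∏ r ∈ Finset.Icc 1 i, (x * chebR (k + 1 - r) (x ^ 2)) := by
  have hc : 0 < 2 * cos (π / (k + 2)) := one_div_pos.1 ((abs_nonneg x).trans_lt hx1)
  have hx : 2 * cos (π / (k + 2)) * |x| < 1 := by
    rw [mul_comm]
    exact (lt_div_iff₀ hc).1 hx1
  refine ⟨summable_abs_bratteliD_mul_pow k i hx, ?_⟩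
  have hU {m : ℕ} (hm : m ≤ k + 1) : (U ℝ m).eval (1 / (2 * √(x ^ 2))) ≠ 0 := by
    refine (U_eval_pos ((cos_pi_div_succ_le hm).trans_lt ?_)).ne'
    rw [sqrt_sq_eq_abs, lt_div_iff₀ (by positivity)]
    linarith
  have ht : 0 < x ^ 2 := by rw [← sq_abs]; positivity
  exact eq_prod_of_tridiagonal (ρ := fun m => chebR m (x ^ 2)) (G := fun i => bratteliGF k i x)
    (chebR_zero _) (fun m hm => chebR_succ_mul_one_sub m ht (hU (by omega)) (hU (by omega)))
    (bratteliGF_zero_eq hx) (fun _ => bratteliGF_succ_eq hx)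
    (bratteliGF_eq_zero_of_lt (lt_add_one k) x) hik
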